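/- Let (R,m) be a local ring, x ∈ m, and let N be a bounded-below complex of finitely generated R-modules. Then depth_R(N ⊗_R K(x,R)) = depth_R(N) − 1, where K(x,R) is the Koszul complex on x. In particular, if x is a nonzerodivisor on R, then depth_R(N ⊗^L_R R/(x)) = depth_R(N) − 1. -/

import Mathlib

open CategoryTheory

/-- `Ext^i_R(M,N)` as an `R`-module, via Mathlib's `Ext` functor on `ModuleCat R`. -/
noncomputable def ExtM (R : Type) [CommRing R] (M N : Type) [AddCommGroup M] [Module R M]
    [AddCommGroup N] [Module R N] (i : ℕ) : ModuleCat R :=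
  ((Ext R (ModuleCat R) i).obj (Opposite.op (ModuleCat.of R M))).obj (ModuleCat.of R N)

/-- `Tor^R_i(M,N)` as an object of `ModuleCat R`, via Mathlib's `Tor` functor. -/
noncomputable def TorM (R : Type) [CommRing R] (M N : Type) [AddCommGroup M] [Module R M]
    [AddCommGroup N] [Module R N] (i : ℕ) : ModuleCat R :=
  ((Tor (ModuleCat R) i).obj (ModuleCat.of R M)).obj (ModuleCat.of R N)

/-- The depth of a module over a local ring: `inf {i | Ext^i_R(k, M) ≠ 0}`, in `ℕ∞`. -/
noncomputable def mdepth (R : Type) [CommRing R] [IsLocalRing R] (M : Type) [AddCommGroup M]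
    [Module R M] : ℕ∞ :=
  sInf {i : ℕ∞ | ∃ n : ℕ, i = n ∧ ¬ Subsingleton (ExtM R (IsLocalRing.ResidueField R) M n)}

/-- Hom groups in the derived category of `R`: `cExt X Y n = Hom_{D(R)}(X, Y[n])`. -/
noncomputable def cExt {R : Type} [CommRing R] (X Y : CochainComplex (ModuleCat R) ℤ)
    (n : ℤ) : Type _ :=
  letI := HasDerivedCategory.standard (ModuleCat R)
  (DerivedCategory.Q.obj X ⟶ (DerivedCategory.Q.obj Y)⟦n⟧)

/-- The residue field `k`, viewed as a complex concentrated in degree `0`. -/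
noncomputable def kCx (R : Type) [CommRing R] [IsLocalRing R] :
    CochainComplex (ModuleCat R) ℤ :=
  (HomologicalComplex.single (ModuleCat R) (ComplexShape.up ℤ) 0).obj
    (ModuleCat.of R (IsLocalRing.ResidueField R))

/-- The depth of an `R`-complex: `inf {n | Ext^n_R(k, Y) ≠ 0}`, where
`Ext^n_R(k,Y) = Hom_{D(R)}(k, Y[n])`, computed in `WithTop (WithBot ℤ)` (so the depth
of the zero complex is `⊤` and unbounded families give `⊥`). -/
noncomputable def cDepth (R : Type) [CommRing R] [IsLocalRing R]
    (Y : CochainComplex (ModuleCat R) ℤ) : WithTop (WithBot ℤ) :=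
  sInf {d : WithTop (WithBot ℤ) | ∃ n : ℤ, d = ((n : WithBot ℤ) : WithTop (WithBot ℤ)) ∧
    ¬ Subsingleton (cExt (kCx R) Y n)}


/-!
Multiplication by `x` induces zero on `Ext_R(k, -)`, since `x` kills `k`. Hence in the long exact
sequence of `Hom_{D(R)}(k, -)` for the triangle `N ⟶[x] N ⟶ cone ⟶ N[1]`, every map induced by
`N ⟶[x] N` vanishes, and `Ext^n(k, cone) = 0` iff `Ext^n(k, N) = 0 = Ext^{n+1}(k, N)`. Taking
infima over `n`, the depth drops by exactly one.
-/

open CategoryTheory Limits Pretriangulated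

lemma sInf_coe_or_succ_add_one (P : ℤ → Prop) :
    sInf {d : WithTop (WithBot ℤ) |
        ∃ n : ℤ, d = ((n : WithBot ℤ) : WithTop (WithBot ℤ)) ∧ (P n ∨ P (n + 1))} + 1 =
      sInf {d : WithTop (WithBot ℤ) |
        ∃ n : ℤ, d = ((n : WithBot ℤ) : WithTop (WithBot ℤ)) ∧ P n} := by
  let e : WithTop (WithBot ℤ) ≃o WithTop (WithBot ℤ) :=
    (OrderIso.addRight (1 : ℤ)).withBotCongr.withTopCongr
  have he (d : WithTop (WithBot ℤ)) : d + 1 = e d := by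
    induction d using WithTop.recTopCoe with
    | top => rfl
    | coe a => induction a using WithBot.recBotCoe <;> rfl
  have he_coe (n : ℤ) :
      e ((n : WithBot ℤ) : WithTop (WithBot ℤ)) = ((n + 1 : ℤ) : WithBot ℤ) := rfl
  rw [he, map_sInf]
  apply le_antisymm
  · refine le_sInf ?_
    rintro _ ⟨n, rfl, hn⟩
    refine sInf_le ⟨_, ⟨n - 1, rfl, Or.inr (by simpa using hn)⟩, ?_⟩
    rw [he_coe, sub_add_cancel]
  · refine le_sInf ?_
    rintro _ ⟨_, ⟨n, rfl, hn | hn⟩, rfl⟩ <;> rw [he_coe]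
    · refine le_trans (b := ((n : WithBot ℤ) : WithTop (WithBot ℤ)))
        (sInf_le ⟨n, rfl, hn⟩) ?_
      exact_mod_cast Int.le_add_one le_rfl
    · exact sInf_le ⟨n + 1, rfl, hn⟩

lemma smul_id_residueField_eq_zero {R : Type*} [CommRing R] [IsLocalRing R] {x : R}
    (hx : x ∈ IsLocalRing.maximalIdeal R) :
    x • 𝟙 (ModuleCat.of R (IsLocalRing.ResidueField R)) = 0 := by
  ext m
  change x • m = 0
  rw [Algebra.smul_def, IsLocalRing.ResidueField.algebraMap_eq,
    (IsLocalRing.residue_eq_zero_iff x).2 hx, zero_mul]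

lemma smul_id_kCx_eq_zero {R : Type} [CommRing R] [IsLocalRing R] {x : R}
    (hx : x ∈ IsLocalRing.maximalIdeal R) : x • 𝟙 (kCx R) = 0 := by
  have h := ((CochainComplex.singleFunctors (ModuleCat R)).functor 0).map_smul x
    (𝟙 (ModuleCat.of R (IsLocalRing.ResidueField R)))
  rw [CategoryTheory.Functor.map_id, smul_id_residueField_eq_zero hx, Functor.map_zero] at h
  exact h.symm

section

variable {R : Type*} [CommRing R] {D : Type*} [Category D] [Preadditive D] [Linear R D]

lemma CategoryTheory.Linear.comp_smul_eq_zero_of_smul_id_eq_zero {A B C : D} {x : R}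
    (hA : x • 𝟙 A = 0) (f : A ⟶ B) (g : B ⟶ C) : f ≫ (x • g) = 0 := by
  rw [Linear.comp_smul, ← Linear.smul_comp, ← Category.id_comp f, ← Linear.smul_comp, hA]
  simp

variable [HasZeroObject D] [HasShift D ℤ] [∀ n : ℤ, (shiftFunctor D n).Additive]
  [∀ n : ℤ, (shiftFunctor D n).Linear R] [Pretriangulated D]

lemma CategoryTheory.Pretriangulated.subsingleton_hom_obj₃_iff_of_mor₁_eq_smul
    {T : Triangle D} (hT : T ∈ distTriang D) {A : D} {x : R} (hA : x • 𝟙 A = 0)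
    {g : T.obj₁ ⟶ T.obj₂} (hg : T.mor₁ = x • g) :
    Subsingleton (A ⟶ T.obj₃) ↔
      Subsingleton (A ⟶ T.obj₂) ∧ Subsingleton (A ⟶ T.obj₁⟦(1 : ℤ)⟧) := by
  constructor
  · intro h
    constructor
    · refine (subsingleton_iff_forall_eq 0).mpr fun b => ?_
      obtain ⟨a, rfl⟩ := Triangle.coyoneda_exact₂ T hT b (h.elim _ _)
      rw [hg, Linear.comp_smul_eq_zero_of_smul_id_eq_zero hA]
    · refine (subsingleton_iff_forall_eq 0).mpr fun a => ?_
      have ha : a ≫ T.mor₁⟦(1 : ℤ)⟧' = 0 := by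
        rw [hg, Functor.map_smul, Linear.comp_smul_eq_zero_of_smul_id_eq_zero hA]
      obtain ⟨c, rfl⟩ := Triangle.coyoneda_exact₁ T hT a ha
      rw [h.elim c 0, zero_comp]
  · rintro ⟨h₂, h₁⟩
    refine (subsingleton_iff_forall_eq 0).mpr fun c => ?_
    obtain ⟨b, rfl⟩ := Triangle.coyoneda_exact₃ T hT c (h₁.elim _ _)
    rw [h₂.elim b 0, zero_comp]

end

namespace DerivedCategory

variable {R : Type*} [CommRing R] {C : Type*} [Category C] [Abelian C] [Linear R C]
  [HasDerivedCategory C]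

lemma subsingleton_hom_shift_mappingCone_smul_id_iff {A : DerivedCategory C} {x : R}
    (hA : x • 𝟙 A = 0) (N : CochainComplex C ℤ) (n : ℤ) :
    Subsingleton (A ⟶ (Q.obj (CochainComplex.mappingCone (x • 𝟙 N)))⟦n⟧) ↔
      Subsingleton (A ⟶ (Q.obj N)⟦n⟧) ∧ Subsingleton (A ⟶ (Q.obj N)⟦n + 1⟧) := by
  let T := Qh.mapTriangle.obj (CochainComplex.mappingCone.triangleh (x • 𝟙 N))
  have hT : T⟦n⟧ ∈ distTriang (DerivedCategory C) :=
    Triangle.shift_distinguished T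
      (Qh.map_distinguished _ (HomotopyCategory.mappingCone_triangleh_distinguished _)) n
  have hmor₁ : (T⟦n⟧).mor₁ = x • (n.negOnePow • (Qh.map
      ((HomotopyCategory.quotient C (ComplexShape.up ℤ)).map (𝟙 N)))⟦n⟧') := by
    change n.negOnePow • (Qh.map ((HomotopyCategory.quotient C _).map (x • 𝟙 N)))⟦n⟧' = _
    rw [Functor.map_smul, Functor.map_smul, Functor.map_smul, smul_comm]
  refine (subsingleton_hom_obj₃_iff_of_mor₁_eq_smul hT hA hmor₁).trans (and_congr Iff.rfl ?_)
  exact (Iso.homCongr (Iso.refl A)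
    ((shiftFunctorAdd' (DerivedCategory C) n 1 (n + 1) rfl).app (Q.obj N))).subsingleton_congr
    |>.symm

end DerivedCategory

theorem stmt14_general (R : Type) [CommRing R] [IsLocalRing R]
    (x : R) (hx : x ∈ IsLocalRing.maximalIdeal R)
    (N : CochainComplex (ModuleCat R) ℤ) :
    cDepth R (CochainComplex.mappingCone (x • (𝟙 N))) + 1 = cDepth R N := by
  let := HasDerivedCategory.standard (ModuleCat R)
  have hk : x • 𝟙 (DerivedCategory.Q.obj (kCx R)) = 0 := by
    rw [← CategoryTheory.Functor.map_id, ← Functor.map_smul, smul_id_kCx_eq_zero hx,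
      Functor.map_zero]
  have hcone (n : ℤ) :
      ¬ Subsingleton (cExt (kCx R) (CochainComplex.mappingCone (x • 𝟙 N)) n) ↔
        ¬ Subsingleton (cExt (kCx R) N n) ∨ ¬ Subsingleton (cExt (kCx R) N (n + 1)) :=
    (not_congr (DerivedCategory.subsingleton_hom_shift_mappingCone_smul_id_iff hk N n)).trans
      not_and_or
  simp only [cDepth, hcone]
  exact sInf_coe_or_succ_add_one _

/-- For `x` in the maximal ideal and a bounded-below complex `N` of finitely generated
modules, `depth(N ⊗ K(x,R)) = depth N − 1`, where `N ⊗ K(x,R)` is the mapping cone of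
multiplication by `x` on `N` (stated additively as `depth(N ⊗ K(x,R)) + 1 = depth N`). -/
theorem stmt14 (R : Type) [CommRing R] [IsLocalRing R] [IsNoetherianRing R]
    (x : R) (hx : x ∈ IsLocalRing.maximalIdeal R)
    (N : CochainComplex (ModuleCat R) ℤ)
    (hfg : ∀ i : ℤ, Module.Finite R (N.X i))
    (hbdd : ∃ n : ℤ, ∀ i : ℤ, n < i → Subsingleton (N.X i)) :
    cDepth R (CochainComplex.mappingCone (x • (𝟙 N))) + 1 = cDepth R N :=
  stmt14_general R x hx N
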